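/- For the single-user (K=1) case with a strictly concave increasing rate function R, the optimal feasible schedule has nondecreasing power between consecutive tight causality constraints and satisfies: if the schedule P* is optimal and the power changes between epoch n and n+1 (P*_n ≠ P*_{n+1}), then either Σ_{i=1}^n P*_i L_i = E_n^a (causality tight, and then P*_{n+1} > P*_n) or Σ_{i=1}^n P*_i L_i = E_n^c (non-overflow tight, and then P*_{n+1} < P*_n). -/

import Mathlib

/-- Slope comparison for a strictly concave function over two disjoint intervals. -/
lemma slope4_aux {R : ℝ → ℝ} (hRconc : StrictConcaveOn ℝ (Set.Ici 0) R)
    {x y z w : ℝ} (hx : 0 ≤ x) (hxy : x < y) (hyz : y < z) (hzw : z < w) :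
    (R w - R z) / (w - z) < (R y - R x) / (y - x) := by
  have hy : (0:ℝ) ≤ y := le_of_lt (lt_of_le_of_lt hx hxy)
  have hz : (0:ℝ) ≤ z := le_of_lt (lt_of_le_of_lt hy hyz)
  have hw : (0:ℝ) ≤ w := le_of_lt (lt_of_le_of_lt hz hzw)
  have h1 := hRconc.slope_anti_adjacent (Set.mem_Ici.mpr hx) (Set.mem_Ici.mpr hz) hxy hyz
  have h2 := hRconc.slope_anti_adjacent (Set.mem_Ici.mpr hy) (Set.mem_Ici.mpr hw) hyz hzw
  linarith

/-- Sum over `Icc 1 m` of a function differing from another only at `n` and `n+1`. -/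
lemma sum_two_diff (m n : ℕ) (f g : ℕ → ℝ)
    (h : ∀ i, i ≠ n → i ≠ n + 1 → f i = g i) :
    ∑ i ∈ Finset.Icc 1 m, f i = ∑ i ∈ Finset.Icc 1 m, g i
      + (if n ∈ Finset.Icc 1 m then f n - g n else 0)
      + (if n + 1 ∈ Finset.Icc 1 m then f (n + 1) - g (n + 1) else 0) := by
  have hne : n ≠ n + 1 := by omega
  have hcongr : ∀ i ∈ Finset.Icc 1 m,
      f i = g i + ((if i = n then f n - g n else 0)
        + (if i = n + 1 then f (n + 1) - g (n + 1) else 0)) := by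
    intro i _
    by_cases h1 : i = n
    · subst h1; simp [hne]
    · by_cases h2 : i = n + 1
      · subst h2; simp [Ne.symm hne]
      · simp [h1, h2, h i h1 h2]
  rw [Finset.sum_congr rfl hcongr, Finset.sum_add_distrib, Finset.sum_add_distrib,
    Finset.sum_ite_eq', Finset.sum_ite_eq']
  ring

/-- Single-user structural characterization of the optimal
schedule: if the optimal power changes between consecutive epochs, then either
the causality constraint is tight there and the power strictly increases, or
the non-overflow constraint is tight there and the power strictly decreases. -/
theorem stmt_14 (N : ℕ) (hN : 1 ≤ N) (L Ea Ec : ℕ → ℝ)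
    (hL : ∀ i, 0 < L i)
    (hend : Ec N = Ea N)
    (R : ℝ → ℝ)
    (hRconc : StrictConcaveOn ℝ (Set.Ici 0) R)
    (hRmono : StrictMonoOn R (Set.Ici 0))
    (P : ℕ → ℝ)
    (hP0 : ∀ i, 1 ≤ i → i ≤ N → 0 ≤ P i)
    (hPfeas : ∀ n, 1 ≤ n → n ≤ N →
      Ec n ≤ ∑ i ∈ Finset.Icc 1 n, P i * L i ∧
      ∑ i ∈ Finset.Icc 1 n, P i * L i ≤ Ea n)
    (hPopt : ∀ Q : ℕ → ℝ, (∀ i, 1 ≤ i → i ≤ N → 0 ≤ Q i) →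
      (∀ n, 1 ≤ n → n ≤ N →
        Ec n ≤ ∑ i ∈ Finset.Icc 1 n, Q i * L i ∧
        ∑ i ∈ Finset.Icc 1 n, Q i * L i ≤ Ea n) →
      ∑ i ∈ Finset.Icc 1 N, R (Q i) * L i ≤ ∑ i ∈ Finset.Icc 1 N, R (P i) * L i) :
    ∀ n, 1 ≤ n → n < N → P n ≠ P (n + 1) →
      ((∑ i ∈ Finset.Icc 1 n, P i * L i = Ea n) ∧ P n < P (n + 1)) ∨
      ((∑ i ∈ Finset.Icc 1 n, P i * L i = Ec n) ∧ P (n + 1) < P n) := by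
  intro n hn1 hnN hPne
  set a := P n with ha
  set b := P (n + 1) with hb
  have hLn := hL n
  have hLn1 := hL (n + 1)
  have hn1N : n + 1 ≤ N := hnN
  have ha0 : 0 ≤ a := hP0 n hn1 (le_of_lt hnN)
  have hb0 : 0 ≤ b := hP0 (n + 1) (by omega) hn1N
  have hSn := hPfeas n hn1 (le_of_lt hnN)
  have hc : 0 < 1 / L n + 1 / L (n + 1) := by positivity
  -- common machinery: for a perturbation s applied at epochs n, n+1
  have key : ∀ s : ℝ,
      (∀ i, 1 ≤ i → i ≤ N → 0 ≤ (fun i => if i = n then a + s / L n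
          else if i = n + 1 then b - s / L (n + 1) else P i) i) →
      Ec n ≤ (∑ i ∈ Finset.Icc 1 n, P i * L i) + s →
      (∑ i ∈ Finset.Icc 1 n, P i * L i) + s ≤ Ea n →
      (R (a + s / L n) - R a) * L n + (R (b - s / L (n + 1)) - R b) * L (n + 1) ≤ 0 := by
    intro s hQ0 hclo hchi
    set Q : ℕ → ℝ := fun i => if i = n then a + s / L n
        else if i = n + 1 then b - s / L (n + 1) else P i with hQ
    have hQn : Q n = a + s / L n := by simp [hQ]
    have hQn1 : Q (n + 1) = b - s / L (n + 1) := by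
      have : n + 1 ≠ n := by omega
      simp [hQ, this]
    have hQother : ∀ i, i ≠ n → i ≠ n + 1 → Q i = P i := by
      intro i h1 h2; simp [hQ, h1, h2]
    have hsums : ∀ m, ∑ i ∈ Finset.Icc 1 m, Q i * L i
        = ∑ i ∈ Finset.Icc 1 m, P i * L i
          + (if n ∈ Finset.Icc 1 m then s else 0)
          + (if n + 1 ∈ Finset.Icc 1 m then -s else 0) := by
      intro m
      have := sum_two_diff m n (fun i => Q i * L i) (fun i => P i * L i)
        (fun i h1 h2 => show _ = _ by simp only [hQother i h1 h2])
      simp only [hQn, hQn1] at this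
      rw [this,
        show (a + s / L n) * L n - a * L n = s by field_simp; ring,
        show (b - s / L (n + 1)) * L (n + 1) - b * L (n + 1) = -s by field_simp; ring]
    have hQfeas : ∀ m, 1 ≤ m → m ≤ N →
        Ec m ≤ ∑ i ∈ Finset.Icc 1 m, Q i * L i ∧
        ∑ i ∈ Finset.Icc 1 m, Q i * L i ≤ Ea m := by
      intro m hm1 hmN
      rw [hsums m]
      have hPm := hPfeas m hm1 hmN
      by_cases h1 : n + 1 ≤ m
      · have : n ∈ Finset.Icc 1 m := by rw [Finset.mem_Icc]; omega
        have h2 : n + 1 ∈ Finset.Icc 1 m := by rw [Finset.mem_Icc]; omega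
        simp only [this, h2, if_pos]
        constructor <;> linarith [hPm.1, hPm.2]
      · by_cases h2 : n ≤ m
        · have hm : m = n := by omega
          have hmem : n ∈ Finset.Icc 1 m := by rw [Finset.mem_Icc]; omega
          have h3 : n + 1 ∉ Finset.Icc 1 m := fun h => by rw [Finset.mem_Icc] at h; omega
          simp only [hmem, h3, if_pos, if_neg, not_false_iff]
          rw [hm]
          constructor <;> linarith
        · have h3 : n ∉ Finset.Icc 1 m := fun h => by rw [Finset.mem_Icc] at h; omega
          have h4 : n + 1 ∉ Finset.Icc 1 m := fun h => by rw [Finset.mem_Icc] at h; omega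
          simp only [h3, h4, if_neg, not_false_iff]
          simpa using hPm
    have hopt := hPopt Q hQ0 hQfeas
    have hRsum := sum_two_diff N n (fun i => R (Q i) * L i) (fun i => R (P i) * L i)
      (fun i h1 h2 => show _ = _ by simp only [hQother i h1 h2])
    simp only [hQn, hQn1] at hRsum
    rw [hRsum] at hopt
    have hnmem : n ∈ Finset.Icc 1 N := by rw [Finset.mem_Icc]; omega
    have hn1mem : n + 1 ∈ Finset.Icc 1 N := by rw [Finset.mem_Icc]; omega
    simp only [hnmem, hn1mem, if_pos, hQn, hQn1] at hopt
    linarith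
  rcases lt_or_gt_of_ne hPne with hlt | hgt
  · -- P n < P (n+1): show causality tight
    left
    refine ⟨?_, hlt⟩
    by_contra hne
    have hslack : ∑ i ∈ Finset.Icc 1 n, P i * L i < Ea n := lt_of_le_of_ne hSn.2 hne
    set δ := Ea n - ∑ i ∈ Finset.Icc 1 n, P i * L i with hδ
    have hδpos : 0 < δ := by rw [hδ]; linarith
    set ε := min δ ((b - a) / (2 * (1 / L n + 1 / L (n + 1)))) with hε
    have hεpos : 0 < ε := lt_min hδpos (div_pos (by linarith) (by positivity))
    have hεsum : ε / L n + ε / L (n + 1) < b - a := by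
      have h1 : ε ≤ (b - a) / (2 * (1 / L n + 1 / L (n + 1))) := min_le_right _ _
      have : ε / L n + ε / L (n + 1) = ε * (1 / L n + 1 / L (n + 1)) := by field_simp
      rw [this]
      calc ε * (1 / L n + 1 / L (n + 1))
          ≤ (b - a) / (2 * (1 / L n + 1 / L (n + 1))) * (1 / L n + 1 / L (n + 1)) := by
            apply mul_le_mul_of_nonneg_right h1 (le_of_lt hc)
        _ = (b - a) / 2 := by field_simp
        _ < b - a := by linarith
    have h1pos : 0 < ε / L n := by positivity
    have h2pos : 0 < ε / L (n + 1) := by positivity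
    have hmid : a + ε / L n < b - ε / L (n + 1) := by linarith
    have hQ0 : ∀ i, 1 ≤ i → i ≤ N → 0 ≤ (fun i => if i = n then a + ε / L n
        else if i = n + 1 then b - ε / L (n + 1) else P i) i := by
      intro i hi1 hiN
      by_cases h1 : i = n
      · simp [h1]; linarith
      · by_cases h2 : i = n + 1
        · simp [h1, h2]; linarith
        · simp [h1, h2]; exact hP0 i hi1 hiN
    have hk := key ε hQ0 (by linarith [hSn.1]) (by linarith [min_le_left δ ((b - a) / (2 * (1 / L n + 1 / L (n + 1))))])
    -- derive contradiction: the gain is positive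
    have hslope := slope4_aux hRconc ha0 (by linarith : a < a + ε / L n) hmid
      (by linarith : b - ε / L (n + 1) < b)
    have e1 : a + ε / L n - a = ε / L n := by ring
    have e2 : b - (b - ε / L (n + 1)) = ε / L (n + 1) := by ring
    rw [e1, e2] at hslope
    have g1 : (R b - R (b - ε / L (n + 1))) / (ε / L (n + 1)) * ε
        < (R (a + ε / L n) - R a) / (ε / L n) * ε :=
      mul_lt_mul_of_pos_right hslope hεpos
    have q1 : (R (a + ε / L n) - R a) / (ε / L n) * ε = (R (a + ε / L n) - R a) * L n := by
      field_simp
    have q2 : (R b - R (b - ε / L (n + 1))) / (ε / L (n + 1)) * ε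
        = (R b - R (b - ε / L (n + 1))) * L (n + 1) := by field_simp
    rw [q1, q2] at g1
    linarith [hk]
  · -- P (n+1) < P n: show non-overflow tight
    right
    refine ⟨?_, hgt⟩
    by_contra hne
    have hslack : Ec n < ∑ i ∈ Finset.Icc 1 n, P i * L i := lt_of_le_of_ne hSn.1 (Ne.symm hne)
    set δ := (∑ i ∈ Finset.Icc 1 n, P i * L i) - Ec n with hδ
    have hδpos : 0 < δ := by rw [hδ]; linarith
    set ε := min δ ((a - b) / (2 * (1 / L n + 1 / L (n + 1)))) with hε
    have hεpos : 0 < ε := lt_min hδpos (div_pos (by linarith) (by positivity))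
    have hεsum : ε / L n + ε / L (n + 1) < a - b := by
      have h1 : ε ≤ (a - b) / (2 * (1 / L n + 1 / L (n + 1))) := min_le_right _ _
      have : ε / L n + ε / L (n + 1) = ε * (1 / L n + 1 / L (n + 1)) := by field_simp
      rw [this]
      calc ε * (1 / L n + 1 / L (n + 1))
          ≤ (a - b) / (2 * (1 / L n + 1 / L (n + 1))) * (1 / L n + 1 / L (n + 1)) := by
            apply mul_le_mul_of_nonneg_right h1 (le_of_lt hc)
        _ = (a - b) / 2 := by field_simp
        _ < a - b := by linarith
    have h1pos : 0 < ε / L n := by positivity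
    have h2pos : 0 < ε / L (n + 1) := by positivity
    have hmid : b + ε / L (n + 1) < a - ε / L n := by linarith
    have hQ0 : ∀ i, 1 ≤ i → i ≤ N → 0 ≤ (fun i => if i = n then a + (-ε) / L n
        else if i = n + 1 then b - (-ε) / L (n + 1) else P i) i := by
      intro i hi1 hiN
      by_cases h1 : i = n
      · simp [h1]; rw [neg_div]; linarith
      · by_cases h2 : i = n + 1
        · simp [h1, h2]; rw [neg_div]; linarith
        · simp [h1, h2]; exact hP0 i hi1 hiN
    have hmin1 : ε ≤ δ := min_le_left _ _
    have hk := key (-ε) hQ0 (by rw [hδ] at hmin1; linarith) (by linarith [hSn.2])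
    have hslope := slope4_aux hRconc hb0 (by linarith : b < b + ε / L (n + 1)) hmid
      (by linarith : a - ε / L n < a)
    have e1 : b + ε / L (n + 1) - b = ε / L (n + 1) := by ring
    have e2 : a - (a - ε / L n) = ε / L n := by ring
    rw [e1, e2] at hslope
    have g1 : (R a - R (a - ε / L n)) / (ε / L n) * ε
        < (R (b + ε / L (n + 1)) - R b) / (ε / L (n + 1)) * ε :=
      mul_lt_mul_of_pos_right hslope hεpos
    have q1 : (R a - R (a - ε / L n)) / (ε / L n) * ε = (R a - R (a - ε / L n)) * L n := by
      field_simp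
    have q2 : (R (b + ε / L (n + 1)) - R b) / (ε / L (n + 1)) * ε
        = (R (b + ε / L (n + 1)) - R b) * L (n + 1) := by field_simp
    rw [q1, q2] at g1
    have eneg1 : a + (-ε) / L n = a - ε / L n := by ring
    have eneg2 : b - (-ε) / L (n + 1) = b + ε / L (n + 1) := by ring
    rw [eneg1, eneg2] at hk
    linarith [hk]
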